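/- arXiv:2604.07270 — 6 statements merged into one kernel-verified Lean document; each statement's English description precedes it below -/
import Mathlib

section
/- Let ω be a combinatorial F-TFT on a complex vector space V, let v·w := ω_{0,2}(v,w) be the associated commutative associative product, and let α := ω_{1,0} ∈ V. Then for every pair (g,n) with 2g + n ≥ 2 and all v₁,…,vₙ ∈ V one has ω_{g,n}(v₁,…,vₙ) = α·α·⋯·α·v₁·v₂·⋯·vₙ, the product in (V,·) of g copies of α together with v₁,…,vₙ (a product of g + n ≥ 1 factors, unambiguous by commutativity and associativity). In particular, a combinatorial F-TFT is uniquely determined by the product ω_{0,2} and the distinguished vector α = ω_{1,0}. -/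
/-- A *combinatorial F-TFT* on a complex vector space `V`: a family of multilinear maps
`ω g n : V^n → V` indexed by pairs `(g, n)` of natural numbers with `2g + n ≥ 2`, which is
symmetric in the `n` inputs and satisfies the gluing axiom of F-cohomological field theories
in cohomological degree zero. -/
structure CombFTFT (V : Type*) [AddCommGroup V] [Module ℂ V] where
  /-- the underlying family of multilinear maps -/
  ω : ∀ (g n : ℕ), MultilinearMap ℂ (fun _ : Fin n => V) V
  /-- symmetry: `ω g n` is invariant under permutations of its inputs -/
  symm : ∀ (g n : ℕ), 2 * g + n ≥ 2 → ∀ (σ : Equiv.Perm (Fin n)) (v : Fin n → V),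
    ω g n (fun i => v (σ i)) = ω g n v
  /-- the gluing axiom -/
  glue : ∀ (g₁ g₂ n₁ n₂ : ℕ), 2 * g₁ + n₁ ≥ 1 → 2 * g₂ + n₂ ≥ 2 →
    ∀ (v : Fin n₁ → V) (w : Fin n₂ → V),
      ω (g₁ + g₂) (n₁ + n₂) (Fin.append v w) =
        ω g₁ (n₁ + 1) (Fin.snoc v (ω g₂ n₂ w))

/-- The (left-nested) product of a nonempty list of vectors with respect to a binary
operation `mul`; junk value `0` on the empty list. -/
def listProd {V : Type*} [Zero V] (mul : V → V → V) : List V → V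
  | [] => 0
  | x :: xs => xs.foldl mul x


section Aux
variable {V : Type*} [AddCommGroup V] [Module ℂ V] (Ω : CombFTFT V)

lemma CombFTFT.ωcast (g : ℕ) {m m' : ℕ} (h : m = m') (u : Fin m → V) :
    Ω.ω g m u = Ω.ω g m' (u ∘ Fin.cast h.symm) := by
  subst h; rfl

lemma CombFTFT.cons_peel (g n : ℕ) (h : 2 * g + n ≥ 2) (x : V) (v : Fin n → V) :
    Ω.ω g (n + 1) (Fin.cons x v) = Ω.ω 0 2 ![x, Ω.ω g n v] := by
  have hg := Ω.glue 0 g 1 n (by omega) h ![x] v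
  rw [Nat.zero_add] at hg
  have h1 : Fin.snoc ![x] (Ω.ω g n v) = ![x, Ω.ω g n v] := by
    funext i; fin_cases i <;> simp [Fin.snoc]
  rw [h1] at hg
  rw [← hg, Ω.ωcast g (Nat.add_comm 1 n) (Fin.append ![x] v)]
  congr 1
  rw [Fin.append_left_eq_cons]
  funext i; simp

lemma CombFTFT.genus_peel (g n : ℕ) (h : 2 * g + n ≥ 1) (v : Fin n → V) :
    Ω.ω (g + 1) n v = Ω.ω g (n + 1) (Fin.snoc v (Ω.ω 1 0 ![])) := by
  have hg := Ω.glue g 1 n 0 h (by omega) v ![]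
  have h0 : Fin.append v (![] : Fin 0 → V) = v := by
    funext i
    rw [show (![] : Fin 0 → V) = Fin.elim0 from funext fun i => i.elim0, Fin.append_elim0]
    rfl
  rw [h0] at hg
  exact hg

lemma CombFTFT.mul_comm' (a b : V) : Ω.ω 0 2 ![a, b] = Ω.ω 0 2 ![b, a] := by
  have := Ω.symm 0 2 (by omega) (Equiv.swap 0 1) ![b, a]
  rw [← this]
  congr 1
  funext i; fin_cases i <;> simp

lemma CombFTFT.mul_assoc' (a b c : V) :
    Ω.ω 0 2 ![Ω.ω 0 2 ![a, b], c] = Ω.ω 0 2 ![a, Ω.ω 0 2 ![b, c]] := by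
  -- ω03 ![x,y,z] = x·(y·z), and symm with finRotate: b·(c·a) = a·(b·c)
  have key : ∀ x y z : V, Ω.ω 0 2 ![y, Ω.ω 0 2 ![z, x]] = Ω.ω 0 2 ![x, Ω.ω 0 2 ![y, z]] := by
    intro x y z
    have h1 : Ω.ω 0 3 ![x, y, z] = Ω.ω 0 2 ![x, Ω.ω 0 2 ![y, z]] := by
      have := Ω.cons_peel 0 2 (by omega) x ![y, z]
      exact this
    have h2 : Ω.ω 0 3 ![y, z, x] = Ω.ω 0 2 ![y, Ω.ω 0 2 ![z, x]] := by
      have := Ω.cons_peel 0 2 (by omega) y ![z, x]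
      exact this
    have h3 := Ω.symm 0 3 (by omega) (finRotate 3) ![x, y, z]
    have h4 : (fun i => ![x, y, z] (finRotate 3 i)) = ![y, z, x] := by
      funext i; fin_cases i <;> simp
    rw [h4] at h3
    rw [← h1, ← h2, h3]
  calc Ω.ω 0 2 ![Ω.ω 0 2 ![a, b], c] = Ω.ω 0 2 ![c, Ω.ω 0 2 ![a, b]] := Ω.mul_comm' _ _
    _ = Ω.ω 0 2 ![b, Ω.ω 0 2 ![c, a]] := key b c a
    _ = Ω.ω 0 2 ![a, Ω.ω 0 2 ![b, c]] := key a b c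

end Aux

section ListAux
variable {V : Type*} [Zero V] (mul : V → V → V)

lemma foldl_mul_assoc (hassoc : ∀ a b c, mul (mul a b) c = mul a (mul b c)) :
    ∀ (l : List V) (x y : V),
    l.foldl mul (mul x y) = mul x (l.foldl mul y) := by
  intro l
  induction l with
  | nil => intro x y; rfl
  | cons a l ih =>
    intro x y
    simp only [List.foldl_cons]
    rw [hassoc, ih]

lemma listProd_cons (hassoc : ∀ a b c, mul (mul a b) c = mul a (mul b c))
    (x : V) (l : List V) (hl : l ≠ []) :
    listProd mul (x :: l) = mul x (listProd mul l) := by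
  cases l with
  | nil => exact absurd rfl hl
  | cons a as =>
    show (a :: as).foldl mul x = mul x (as.foldl mul a)
    rw [List.foldl_cons, foldl_mul_assoc mul hassoc]

lemma listProd_perm (hassoc : ∀ a b c, mul (mul a b) c = mul a (mul b c))
    (hcomm : ∀ a b, mul a b = mul b a) {l₁ l₂ : List V} (p : l₁.Perm l₂) :
    listProd mul l₁ = listProd mul l₂ := by
  induction p with
  | nil => rfl
  | @cons x m₁ m₂ p ih =>
    rcases m₁ with _ | ⟨a, as⟩
    · rw [p.nil_eq]
    · have hm₂ : m₂ ≠ [] := by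
        intro hh
        rw [hh] at p
        exact absurd p.eq_nil (by simp)
      rw [listProd_cons mul hassoc x _ (by simp), listProd_cons mul hassoc x _ hm₂, ih]
  | swap a b l =>
    show (a :: l).foldl mul b = (b :: l).foldl mul a
    rw [List.foldl_cons, List.foldl_cons, hcomm]
  | trans _ _ ih₁ ih₂ => exact ih₁.trans ih₂

end ListAux

section Main
variable {V : Type*} [AddCommGroup V] [Module ℂ V] (Ω : CombFTFT V)

lemma CombFTFT.main0 : ∀ n, 2 ≤ n → ∀ v : Fin n → V,
    Ω.ω 0 n v = listProd (fun a b => Ω.ω 0 2 ![a, b]) (List.ofFn v) := by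
  intro n
  induction n with
  | zero => omega
  | succ k ih =>
    intro h v
    rcases Nat.lt_or_ge k 2 with hk | hk
    · have hk1 : k = 1 := by omega
      subst hk1
      have hv : v = ![v 0, v 1] := by funext i; fin_cases i <;> rfl
      rw [hv]
      show Ω.ω 0 2 ![v 0, v 1] = listProd _ [v 0, v 1]
      rfl
    · have hcv : Ω.ω 0 (k+1) v = Ω.ω 0 (k+1) (Fin.cons (v 0) (Fin.tail v)) := by
        rw [Fin.cons_self_tail]
      rw [hcv, Ω.cons_peel 0 k (by omega) (v 0) (Fin.tail v), ih hk]
      rw [List.ofFn_succ (f := v)]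
      have htail : (fun i : Fin k => v i.succ) = Fin.tail v := rfl
      rw [htail]
      rw [listProd_cons _ (fun a b c => Ω.mul_assoc' a b c) (v 0) _
        (by simp [List.ofFn_eq_nil_iff]; omega)]
end Main

/-- For a combinatorial F-TFT `Ω` with product `v · w := ω₀₂(v, w)` and distinguished vector
`α := ω₁₀`, one has `ω_{g,n}(v₁, …, vₙ) = α · ⋯ · α · v₁ · ⋯ · vₙ` (`g` copies of `α`),
for every `(g, n)` with `2g + n ≥ 2`.  In particular a combinatorial F-TFT is uniquely
determined by `ω₀₂` and `ω₁₀`. -/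
theorem CombFTFT.eval (V : Type*) [AddCommGroup V] [Module ℂ V] (Ω : CombFTFT V) :
    ∀ (g n : ℕ), 2 * g + n ≥ 2 → ∀ v : Fin n → V,
      Ω.ω g n v =
        listProd (fun a b => Ω.ω 0 2 ![a, b])
          (List.replicate g (Ω.ω 1 0 ![]) ++ List.ofFn v) := by
  intro g
  induction g with
  | zero =>
    intro n h v
    rw [Ω.main0 n (by omega) v]
    simp
  | succ g' ih =>
    intro n h v
    by_cases h0 : 2 * g' + n ≥ 1
    · rw [Ω.genus_peel g' n h0 v, ih (n + 1) (by omega) (Fin.snoc v (Ω.ω 1 0 ![]))]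
      apply listProd_perm _ (fun a b c => Ω.mul_assoc' a b c) (fun a b => Ω.mul_comm' a b)
      have hsnoc : List.ofFn (Fin.snoc v (Ω.ω 1 0 ![]) : Fin (n+1) → V)
          = List.ofFn v ++ [Ω.ω 1 0 ![]] := by
        rw [List.ofFn_succ']
        simp [Fin.snoc_castSucc, Fin.snoc_last, List.concat_eq_append]
      rw [hsnoc, List.replicate_succ, ← List.append_assoc]
      exact (List.perm_append_singleton _ _).trans (List.Perm.refl _)
    · have hg : g' = 0 := by omega
      have hn : n = 0 := by omega
      subst hg; subst hn
      have hv : v = ![] := by funext i; exact i.elim0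
      rw [hv]
      rfl
end

section
/- Let Ω ⊆ ℂ be a connected open set containing 0, let a, b ∈ ℂ with b ≠ 0, and let c : Ω → ℂ be analytic, not identically zero, with c(0) = 0, satisfying (a + b·t)·c′(t) = (1 − b)·c(t) for all t ∈ Ω. Then a = 0, the number r := 1/b is an integer with r ≥ 2, and there exists a nonzero constant A ∈ ℂ such that c(t) = A·t^{r−1} for all t ∈ Ω. -/
open Filter Metric Set
open scoped Topology

/-- Let `Ω ⊆ ℂ` be a connected open set containing `0`, let `a, b ∈ ℂ` with `b ≠ 0`, and let
`c` be analytic on `Ω`, not identically zero on `Ω`, with `c(0) = 0`, satisfying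
`(a + b t) c'(t) = (1 − b) c(t)` on `Ω`.  Then `a = 0`, the number `r := 1/b` is an integer
`≥ 2`, and `c(t) = A t^(r−1)` on `Ω` for some nonzero constant `A`. -/
theorem conformal_rigidity_dim_one (Ω : Set ℂ) (hΩopen : IsOpen Ω)
    (hΩconn : IsConnected Ω) (h0 : (0 : ℂ) ∈ Ω)
    (a b : ℂ) (hb : b ≠ 0)
    (c : ℂ → ℂ) (hc : AnalyticOnNhd ℂ c Ω)
    (hne : ∃ t ∈ Ω, c t ≠ 0) (hc0 : c 0 = 0)
    (hode : ∀ t ∈ Ω, (a + b * t) * deriv c t = (1 - b) * c t) :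
    a = 0 ∧ ∃ r : ℕ, 2 ≤ r ∧ b = ((r : ℂ))⁻¹ ∧
      ∃ A : ℂ, A ≠ 0 ∧ ∀ t ∈ Ω, c t = A * t ^ (r - 1) := by
  have hpre := hΩconn.isPreconnected
  have hA0 : AnalyticAt ℂ c 0 := hc 0 h0
  -- c is not eventually zero at 0
  have hnev : ¬ (∀ᶠ z in 𝓝 (0:ℂ), c z = 0) := by
    intro h
    obtain ⟨t, ht, hct⟩ := hne
    exact hct (hc.eqOn_of_preconnected_of_eventuallyEq analyticOnNhd_const hpre h0 h ht)
  -- order of vanishing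
  have hord : analyticOrderAt c 0 ≠ ⊤ := fun h => hnev (analyticOrderAt_eq_top.mp h)
  obtain ⟨n, hn⟩ : ∃ n : ℕ, analyticOrderAt c 0 = n := by
    obtain ⟨m, hm⟩ := WithTop.ne_top_iff_exists.mp hord
    exact ⟨m, hm.symm⟩
  obtain ⟨g, hg, hg0, hev⟩ := hA0.analyticOrderAt_eq_natCast.mp hn
  have hev' : ∀ᶠ z in 𝓝 (0:ℂ), c z = z ^ n * g z := by
    filter_upwards [hev] with z hz
    simpa [smul_eq_mul] using hz
  have hn1 : 1 ≤ n := by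
    by_contra h
    have h0n : n = 0 := by omega
    have h2 := hev'.self_of_nhds
    rw [h0n, pow_zero, one_mul, hc0] at h2
    exact hg0 h2.symm
  -- a ball around 0 with all properties
  have hball : ∀ᶠ z in 𝓝 (0:ℂ), z ∈ Ω ∧ c z = z ^ n * g z ∧ AnalyticAt ℂ g z :=
    (hΩopen.eventually_mem h0).and (hev'.and hg.eventually_analyticAt)
  obtain ⟨ε, hε, hB⟩ := Metric.eventually_nhds_iff.mp hball
  have hgOn : AnalyticOnNhd ℂ g (Metric.ball (0:ℂ) ε) :=
    fun z hz => (hB (Metric.mem_ball.mp hz)).2.2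
  have hcg : ContinuousAt g 0 := hg.continuousAt
  have hcg' : ContinuousAt (deriv g) 0 :=
    (hgOn.deriv 0 (Metric.mem_ball_self hε)).continuousAt
  -- derivative formula on the ball
  have hderiv : ∀ t : ℂ, dist t 0 < ε →
      deriv c t = (n : ℂ) * t ^ (n - 1) * g t + t ^ n * deriv g t := by
    intro t ht
    have hmem : ∀ᶠ z in 𝓝 t, z ∈ Metric.ball (0:ℂ) ε :=
      Metric.isOpen_ball.eventually_mem (Metric.mem_ball.mpr ht)
    have hloc : c =ᶠ[𝓝 t] fun z => z ^ n * g z :=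
      hmem.mono fun z hz => (hB (Metric.mem_ball.mp hz)).2.1
    have hdg : DifferentiableAt ℂ g t := ((hB ht).2.2).differentiableAt
    rw [hloc.deriv_eq, deriv_fun_mul (differentiableAt_pow n) hdg, deriv_pow_field]
  -- key continuity principle: a continuous function vanishing on the punctured ball vanishes at 0
  have key : ∀ h : ℂ → ℂ, ContinuousAt h 0 →
      (∀ t : ℂ, t ≠ 0 → dist t 0 < ε → h t = 0) → h 0 = 0 := by
    intro h hcont hz
    have h1 : Tendsto h (𝓝[≠] (0:ℂ)) (𝓝 (h 0)) :=
      hcont.continuousWithinAt.tendsto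
    have heq : h =ᶠ[𝓝[≠] (0:ℂ)] fun _ => 0 := by
      filter_upwards [eventually_nhdsWithin_of_eventually_nhds
        (Metric.eventually_nhds_iff.mpr ⟨ε, hε, fun z hz => hz⟩),
        self_mem_nhdsWithin] with z hd hne0
      exact hz z hne0 hd
    have h2 : Tendsto h (𝓝[≠] (0:ℂ)) (𝓝 0) :=
      Tendsto.congr' heq.symm tendsto_const_nhds
    exact tendsto_nhds_unique h1 h2
  -- reduced ODE on the punctured ball
  have E1 : ∀ t : ℂ, t ≠ 0 → dist t 0 < ε →
      (a + b * t) * ((n:ℂ) * g t + t * deriv g t) = (1 - b) * (t * g t) := by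
    intro t ht0 htε
    have hO := hode t (hB htε).1
    rw [hderiv t htε, (hB htε).2.1] at hO
    have hpow : (t : ℂ) ^ n = t ^ (n-1) * t := by
      conv_lhs => rw [← Nat.sub_add_cancel hn1, pow_succ]
    rw [hpow] at hO
    have hc1 : t ^ (n-1) ≠ 0 := pow_ne_zero _ ht0
    apply mul_left_cancel₀ hc1
    linear_combination hO
  -- a = 0
  have ha : a = 0 := by
    have h0' := key (fun t => (a + b*t) * ((n:ℂ) * g t + t * deriv g t) - (1-b) * (t * g t))
      (ContinuousAt.sub
        (ContinuousAt.mul (continuousAt_const.add (continuousAt_const.mul continuousAt_id))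
          ((continuousAt_const.mul hcg).add (continuousAt_id.mul hcg')))
        (continuousAt_const.mul (continuousAt_id.mul hcg)))
      (fun t ht0 htε => by simp [E1 t ht0 htε])
    simp only [mul_zero, zero_mul, add_zero, mul_comm, zero_add, sub_zero] at h0'
    have hne' : (n:ℂ) * g 0 ≠ 0 :=
      mul_ne_zero (Nat.cast_ne_zero.mpr (by omega)) hg0
    have : a * ((n:ℂ) * g 0) = 0 := by linear_combination h0'
    exact (mul_eq_zero.mp this).resolve_right hne'
  -- second cancellation: b (n g + t g') = (1-b) g on punctured ball
  have E2 : ∀ t : ℂ, t ≠ 0 → dist t 0 < ε →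
      b * ((n:ℂ) * g t + t * deriv g t) = (1 - b) * g t := by
    intro t ht0 htε
    have h := E1 t ht0 htε
    rw [ha] at h
    apply mul_left_cancel₀ ht0
    linear_combination h
  -- b (n+1) = 1
  have hbn : b * ((n:ℂ) + 1) = 1 := by
    have h0' := key (fun t => b * ((n:ℂ) * g t + t * deriv g t) - (1-b) * g t)
      (ContinuousAt.sub
        (continuousAt_const.mul ((continuousAt_const.mul hcg).add (continuousAt_id.mul hcg')))
        (continuousAt_const.mul hcg))
      (fun t ht0 htε => by simp [E2 t ht0 htε])
    simp only [mul_zero, zero_mul, add_zero, sub_zero] at h0'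
    have : (b * ((n:ℂ) + 1) - 1) * g 0 = 0 := by linear_combination h0'
    have h2 := (mul_eq_zero.mp this).resolve_right hg0
    linear_combination h2
  -- deriv g vanishes on the ball
  have hgz : ∀ t : ℂ, dist t 0 < ε → deriv g t = 0 := by
    have hpunc : ∀ t : ℂ, t ≠ 0 → dist t 0 < ε → deriv g t = 0 := by
      intro t ht0 htε
      have h := E2 t ht0 htε
      have hbt : b * t ≠ 0 := mul_ne_zero hb ht0
      have h2 : b * t * deriv g t = 0 := by linear_combination h - g t * hbn
      exact (mul_eq_zero.mp h2).resolve_left hbt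
    intro t htε
    rcases eq_or_ne t 0 with rfl | ht0
    · exact key (deriv g) hcg' hpunc
    · exact hpunc t ht0 htε
  -- g is constant on the ball
  have hconst : ∀ t ∈ Metric.ball (0:ℂ) ε, g t = g 0 := by
    intro t ht
    refine (convex_ball (0:ℂ) ε).is_const_of_fderivWithin_eq_zero
      (fun z hz => (hgOn z hz).differentiableAt.differentiableWithinAt)
      (fun z hz => ?_) ht (Metric.mem_ball_self hε)
    rw [fderivWithin_of_isOpen Metric.isOpen_ball hz]
    refine ContinuousLinearMap.ext_ring ?_
    rw [fderiv_apply_one_eq_deriv, hgz z (Metric.mem_ball.mp hz)]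
    simp
  -- identity theorem
  have heqn : c =ᶠ[𝓝 (0:ℂ)] fun t => g 0 * t ^ n := by
    filter_upwards [Metric.eventually_nhds_iff.mpr ⟨ε, hε, fun z hz => hz⟩] with z hz
    rw [(hB hz).2.1, hconst z (Metric.mem_ball.mpr hz), mul_comm]
  have hfinal : Set.EqOn c (fun t => g 0 * t ^ n) Ω :=
    hc.eqOn_of_preconnected_of_eventuallyEq
      (fun z _ => analyticAt_const.mul (analyticAt_id.pow n)) hpre h0 heqn
  refine ⟨ha, n + 1, by omega, ?_, g 0, hg0, fun t ht => ?_⟩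
  · have hne' : ((n:ℂ) + 1) ≠ 0 := by
      have : ((n:ℂ) + 1) = ((n+1 : ℕ) : ℂ) := by push_cast; ring
      rw [this]
      exact Nat.cast_ne_zero.mpr (Nat.succ_ne_zero n)
    rw [show ((↑(n+1) : ℂ)) = (n:ℂ) + 1 by push_cast; ring]
    field_simp
    linear_combination hbn
  · simpa using hfinal ht
end

section
/- Let r ∈ ℂ, let Ω ⊆ ℂ be a connected open neighbourhood of 0, and let F : Ω → ℂ be analytic with F'' not identically zero, F''(0) = 0, and t·F'''(t) = (r−1)·F''(t) for all t ∈ Ω. Then r is an integer with r ≥ 2 and there exists A ∈ ℂ, A ≠ 0, such that F(t) = A·t^{r+1}/(r(r+1)) + F'(0)·t + F(0) for all t ∈ Ω. -/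
open Filter Metric Set Topology

lemma analyticAt_deriv' {f : ℂ → ℂ} {x : ℂ} (h : AnalyticAt ℂ f x) :
    AnalyticAt ℂ (deriv f) x := by
  obtain ⟨s, hs, hfs⟩ := h.eventually_analyticAt.exists_mem
  exact (AnalyticOnNhd.deriv (fun y hy => hfs y hy)) x (mem_of_mem_nhds hs)

lemma const_of_deriv_zero_ball {f : ℂ → ℂ} {ε : ℝ}
    (hd : ∀ x ∈ Metric.ball (0:ℂ) ε, DifferentiableAt ℂ f x)
    (h0 : ∀ x ∈ Metric.ball (0:ℂ) ε, deriv f x = 0)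
    {x : ℂ} (hx : x ∈ Metric.ball (0:ℂ) ε) : f x = f 0 := by
  have hε : (0:ℝ) < ε := pos_of_mem_ball hx
  refine (convex_ball (0:ℂ) ε).is_const_of_fderivWithin_eq_zero
    (fun y hy => (hd y hy).differentiableWithinAt) (fun y hy => ?_) hx (mem_ball_self hε)
  rw [fderivWithin_of_isOpen isOpen_ball hy]
  have h1 := (hd y hy).hasDerivAt
  rw [h0 y hy] at h1
  rw [h1.hasFDerivAt.fderiv]
  ext z
  simp

/-- Let `r ∈ ℂ`, let `Ω ⊆ ℂ` be a connected open neighbourhood of `0`, and let `F` be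
analytic on `Ω` with `F''` not identically zero on `Ω`, `F''(0) = 0`, and
`t F'''(t) = (r − 1) F''(t)` on `Ω`.  Then `r` is an integer `≥ 2` and there is `A ≠ 0` with
`F(t) = A t^(r+1) / (r (r+1)) + F'(0) t + F(0)` on `Ω`. -/
theorem vector_potential_dim_one (r : ℂ) (Ω : Set ℂ) (hΩopen : IsOpen Ω)
    (hΩconn : IsConnected Ω) (h0 : (0 : ℂ) ∈ Ω)
    (F : ℂ → ℂ) (hF : AnalyticOnNhd ℂ F Ω)
    (hne : ∃ t ∈ Ω, deriv (deriv F) t ≠ 0)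
    (hF20 : deriv (deriv F) 0 = 0)
    (hode : ∀ t ∈ Ω, t * deriv (deriv (deriv F)) t = (r - 1) * deriv (deriv F) t) :
    ∃ n : ℕ, 2 ≤ n ∧ r = (n : ℂ) ∧
      ∃ A : ℂ, A ≠ 0 ∧ ∀ t ∈ Ω,
        F t = A * t ^ (n + 1) / ((n : ℂ) * ((n : ℂ) + 1)) + deriv F 0 * t + F 0 := by
  set G : ℂ → ℂ := deriv (deriv F) with hGdef
  have hGa : AnalyticOnNhd ℂ G Ω := fun t ht =>
    analyticAt_deriv' (analyticAt_deriv' (hF t ht))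
  have hG0 : AnalyticAt ℂ G 0 := hGa 0 h0
  -- the order of vanishing of G at 0 is finite
  have hordne : analyticOrderAt G 0 ≠ ⊤ := by
    intro h
    rw [analyticOrderAt_eq_top] at h
    obtain ⟨t, ht, htne⟩ := hne
    exact htne (hGa.eqOn_zero_of_preconnected_of_eventuallyEq_zero
      hΩconn.isPreconnected h0 h ht)
  obtain ⟨m, hm⟩ : ∃ m : ℕ, analyticOrderAt G 0 = (m : ℕ∞) := by
    lift analyticOrderAt G 0 to ℕ using hordne with m hm
    exact ⟨m, rfl⟩
  obtain ⟨g, hga, hg0, hgeq0⟩ := (hG0.analyticOrderAt_eq_natCast (n := m)).mp hm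
  have hgeq : ∀ᶠ z in 𝓝 (0:ℂ), G z = z ^ m * g z := by
    filter_upwards [hgeq0] with z hz
    simpa using hz
  -- m ≥ 1
  have hm1 : 1 ≤ m := by
    rcases Nat.eq_zero_or_pos m with h | h
    · exfalso
      have := hgeq.self_of_nhds
      rw [h, pow_zero, one_mul, hF20] at this
      exact hg0 this.symm
    · exact h
  obtain ⟨k, rfl⟩ : ∃ k, m = k + 1 := ⟨m - 1, (Nat.succ_pred_eq_of_pos hm1).symm⟩
  -- derivative of G near 0
  have hgdiff : ∀ᶠ t in 𝓝 (0:ℂ), AnalyticAt ℂ g t := hga.eventually_analyticAt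
  have hderiv_eq : deriv G =ᶠ[𝓝 (0:ℂ)] deriv (fun s => s ^ (k+1) * g s) :=
    Filter.EventuallyEq.deriv hgeq
  have hodeev : ∀ᶠ t in 𝓝 (0:ℂ), t * deriv G t = (r - 1) * G t := by
    filter_upwards [hΩopen.eventually_mem h0] with t ht
    exact hode t ht
  have key : ∀ᶠ t in 𝓝 (0:ℂ),
      t ^ (k+1) * (((k:ℂ)+1) * g t + t * deriv g t) = t ^ (k+1) * ((r-1) * g t) := by
    filter_upwards [hgeq, hderiv_eq, hgdiff, hodeev] with t h1 h2 h3 h4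
    have hd : deriv (fun s => s ^ (k+1) * g s) t
        = ((k+1 : ℕ) : ℂ) * t ^ k * g t + t ^ (k+1) * deriv g t := by
      rw [deriv_fun_mul (differentiableAt_pow _) h3.differentiableAt]
      simp [deriv_pow]
    rw [h2, hd] at h4
    rw [h1] at h4
    push_cast at h4 ⊢
    ring_nf at h4 ⊢
    linear_combination h4
  have key' : ∀ᶠ t in 𝓝[≠] (0:ℂ),
      ((k:ℂ)+1) * g t + t * deriv g t = (r-1) * g t := by
    filter_upwards [key.filter_mono nhdsWithin_le_nhds, self_mem_nhdsWithin] with t h ht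
    exact mul_left_cancel₀ (pow_ne_zero _ ht) h
  have hc1 : ContinuousAt g 0 := hga.continuousAt
  have hc2 : ContinuousAt (deriv g) 0 := (analyticAt_deriv' hga).continuousAt
  -- identify r
  have hlim1 : Tendsto (fun t => ((k:ℂ)+1) * g t + t * deriv g t) (𝓝[≠] (0:ℂ))
      (𝓝 (((k:ℂ)+1) * g 0)) := by
    have : Tendsto (fun t => ((k:ℂ)+1) * g t + t * deriv g t) (𝓝 (0:ℂ))
        (𝓝 (((k:ℂ)+1) * g 0 + 0 * deriv g 0)) :=
      ((continuousAt_const.mul hc1).add (continuousAt_id.mul hc2)).tendsto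
    simpa using this.mono_left nhdsWithin_le_nhds
  have hlim2 : Tendsto (fun t => (r-1) * g t) (𝓝[≠] (0:ℂ)) (𝓝 ((r-1) * g 0)) :=
    (continuousAt_const.mul hc1).tendsto.mono_left nhdsWithin_le_nhds
  have hr1 : ((k:ℂ)+1) * g 0 = (r-1) * g 0 :=
    tendsto_nhds_unique (hlim1.congr' key') hlim2
  have hr : r - 1 = (k:ℂ) + 1 := (mul_right_cancel₀ hg0 hr1).symm
  -- deriv g vanishes near 0
  have hdg' : ∀ᶠ t in 𝓝[≠] (0:ℂ), deriv g t = 0 := by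
    filter_upwards [key', self_mem_nhdsWithin] with t h ht
    rw [hr] at h
    have : t * deriv g t = 0 := by linear_combination h
    exact (mul_eq_zero.mp this).resolve_left ht
  have hdg0 : deriv g 0 = 0 := by
    have h1 : Tendsto (deriv g) (𝓝[≠] (0:ℂ)) (𝓝 (deriv g 0)) :=
      hc2.tendsto.mono_left nhdsWithin_le_nhds
    have h2 : Tendsto (deriv g) (𝓝[≠] (0:ℂ)) (𝓝 0) := by
      refine Tendsto.congr' ?_ (tendsto_const_nhds (x := (0:ℂ)))
      filter_upwards [hdg'] with t ht
      exact ht.symm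
    exact tendsto_nhds_unique h1 h2
  have hdgall : ∀ᶠ t in 𝓝 (0:ℂ), deriv g t = 0 := by
    rw [← nhdsNE_sup_pure, eventually_sup]
    exact ⟨hdg', by simpa using hdg0⟩
  -- get a ball
  obtain ⟨ε, hεpos, hball⟩ : ∃ ε > 0, ∀ t ∈ Metric.ball (0:ℂ) ε,
      (G t = t ^ (k+1) * g t ∧ AnalyticAt ℂ g t ∧ deriv g t = 0) ∧ t ∈ Ω := by
    have h := ((hgeq.and (hgdiff.and hdgall)).and (hΩopen.eventually_mem h0))
    rw [Metric.eventually_nhds_iff_ball] at h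
    obtain ⟨ε, hε, h⟩ := h
    exact ⟨ε, hε, fun t ht => by
      obtain ⟨⟨a, b, c⟩, d⟩ := h t ht; exact ⟨⟨a, b, c⟩, d⟩⟩
  -- g is constant on the ball
  set A : ℂ := g 0 with hAdef
  have hgconst : ∀ t ∈ Metric.ball (0:ℂ) ε, g t = A := by
    intro t ht
    exact const_of_deriv_zero_ball
      (fun x hx => ((hball x hx).1.2.1).differentiableAt)
      (fun x hx => (hball x hx).1.2.2) ht
  have hGball : ∀ t ∈ Metric.ball (0:ℂ) ε, G t = A * t ^ (k+1) := by
    intro t ht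
    rw [(hball t ht).1.1, hgconst t ht]; ring
  -- the candidate polynomial
  set n : ℕ := k + 2 with hndef
  have hnC : ((n:ℂ)) ≠ 0 := Nat.cast_ne_zero.mpr (by omega)
  have hn1C : ((n:ℂ) + 1) ≠ 0 := by
    have h : ((n:ℂ) + 1) = ((n+1:ℕ):ℂ) := by push_cast; ring
    rw [h]
    exact Nat.cast_ne_zero.mpr (by omega)
  set c : ℂ := (n:ℂ) * ((n:ℂ) + 1) with hcdef
  have hc : c ≠ 0 := mul_ne_zero hnC hn1C
  set P : ℂ → ℂ := fun t => A / c * t ^ (n+1) + (deriv F 0 * t + F 0) with hPdef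
  have hPderiv : ∀ t : ℂ, HasDerivAt P (A / c * (((n:ℂ)+1) * t ^ n) + deriv F 0) t := by
    intro t
    have h1 := (hasDerivAt_pow (n+1) t).const_mul (A / c)
    have h2 : HasDerivAt (fun t : ℂ => deriv F 0 * t + F 0) (deriv F 0) t := by
      simpa using ((hasDerivAt_id t).const_mul (deriv F 0)).add_const (F 0)
    have := h1.add h2
    simpa [Nat.add_sub_cancel, Pi.add_def] using this
  have hPd1 : deriv P = fun t => A / c * (((n:ℂ)+1) * t ^ n) + deriv F 0 := by
    funext t; exact (hPderiv t).deriv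
  have hPd2 : ∀ t : ℂ, deriv (deriv P) t = A * t ^ (k+1) := by
    intro t
    rw [hPd1]
    have h1 := ((hasDerivAt_pow n t).const_mul (A / c * ((n:ℂ)+1))).add_const (deriv F 0)
    have h2 : HasDerivAt (fun t : ℂ => A / c * (((n:ℂ)+1) * t ^ n) + deriv F 0)
        (A / c * ((n:ℂ)+1) * ((n:ℂ) * t ^ (n-1))) t := by
      exact h1.congr_of_eventuallyEq (Filter.Eventually.of_forall fun x => by ring)
    rw [h2.deriv]
    have hnk : n - 1 = k + 1 := rfl
    rw [hnk, hcdef]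
    field_simp
  -- F = P on the ball
  have hFP : ∀ t ∈ Metric.ball (0:ℂ) ε, F t = P t := by
    have hd1 : ∀ t ∈ Metric.ball (0:ℂ) ε, deriv F t = deriv P t := by
      have hcst : ∀ t ∈ Metric.ball (0:ℂ) ε,
          (fun s => deriv F s - deriv P s) t = (fun s => deriv F s - deriv P s) 0 := by
        intro t ht
        refine const_of_deriv_zero_ball (f := fun s => deriv F s - deriv P s) (fun x hx => ?_) (fun x hx => ?_) ht
        · have hdP : DifferentiableAt ℂ (deriv P) x := by
            rw [hPd1]; fun_prop
          exact ((analyticAt_deriv' (hF x (hball x hx).2)).differentiableAt).sub hdP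
        · have hdF : DifferentiableAt ℂ (deriv F) x :=
            (analyticAt_deriv' (hF x (hball x hx).2)).differentiableAt
          have hdP : DifferentiableAt ℂ (deriv P) x := by
            rw [hPd1]
            fun_prop
          rw [deriv_fun_sub hdF hdP, hPd2 x, ← hGdef, hGball x hx, sub_self]
      intro t ht
      have h1 := hcst t ht
      have h2 : deriv P 0 = deriv F 0 := by
        rw [hPd1]; simp [hndef]
      simp only at h1
      rw [h2, sub_self] at h1
      exact sub_eq_zero.mp h1
    intro t ht
    have hcst : ∀ s ∈ Metric.ball (0:ℂ) ε,
        (fun u => F u - P u) s = (fun u => F u - P u) 0 := by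
      intro s hs
      refine const_of_deriv_zero_ball (f := fun u => F u - P u) (fun x hx => ?_) (fun x hx => ?_) hs
      · exact ((hF x (hball x hx).2).differentiableAt).sub ((hPderiv x).differentiableAt)
      · rw [deriv_fun_sub ((hF x (hball x hx).2).differentiableAt)
          ((hPderiv x).differentiableAt), hd1 x hx, sub_self]
    have h1 := hcst t ht
    have h2 : P 0 = F 0 := by simp [hPdef]
    simp only at h1
    rw [h2, sub_self] at h1
    exact sub_eq_zero.mp h1
  -- identity theorem: F = P on Ω
  have hPa : AnalyticOnNhd ℂ P univ := by
    intro t _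
    exact ((analyticAt_const.mul ((analyticAt_id).pow (n+1))).add
      ((analyticAt_const.mul analyticAt_id).add analyticAt_const))
  have hFPev : F =ᶠ[𝓝 (0:ℂ)] P :=
    eventually_of_mem (ball_mem_nhds 0 hεpos) hFP
  have hFPΩ : EqOn F P Ω :=
    hF.eqOn_of_preconnected_of_eventuallyEq (fun t _ => hPa t trivial)
      hΩconn.isPreconnected h0 hFPev
  -- conclusion
  refine ⟨n, by omega, ?_, A, hg0, ?_⟩
  · rw [hndef]; push_cast; linear_combination hr
  · intro t ht
    rw [hFPΩ ht, hPdef]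
    simp only
    rw [hcdef]
    ring
end

section
/- Fix z ∈ ℂ with z ≠ 0 and an integer N ≥ 1. Let U ⊆ ℂ^N be open, let Ψ, R : U → Mat_N(ℂ) and h : U → ℂ^N be holomorphic with Ψ(u) invertible and h_i(u) ≠ 0 for every u ∈ U and every i, and set H(u) := diag(h₁(u),…,h_N(u)). For a direction v ∈ ℂ^N let D_v denote the directional derivative applied entrywise. Assume that at every point of U and for every v ∈ ℂ^N: D_v R = R·(D_v H)·H^{-1} + (D_v Ψ)·Ψ^{-1}·R − z^{-1}·(R·diag(v) − diag(v)·R). Then the matrix-valued map X(u) := R(u)·H(u)^{-1}·diag(e^{u₁/z},…,e^{u_N/z}) satisfies, at every point of U and for every direction v ∈ ℂ^N: D_v X = (D_v Ψ)·Ψ^{-1}·X + z^{-1}·diag(v)·X. -/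
/-- The directional derivative (along `v`, at the point `u`) of a matrix-valued function,
applied entrywise. -/
noncomputable def Dmat {N : ℕ} (F : (Fin N → ℂ) → Matrix (Fin N) (Fin N) ℂ)
    (u v : Fin N → ℂ) : Matrix (Fin N) (Fin N) ℂ :=
  Matrix.of fun i j => fderiv ℂ (fun x => F x i j) u v

/-- Fix `z ≠ 0` and `N ≥ 1`.  Let `Ψ, R : U → Mat_N(ℂ)` and `h : U → ℂ^N` be holomorphic on
an open set `U ⊆ ℂ^N`, with `Ψ(u)` invertible and `hᵢ(u) ≠ 0` everywhere, and set
`H = diag(h₁, …, h_N)`.  If `R` satisfies the differential equation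
`D_v R = R (D_v H) H⁻¹ + (D_v Ψ) Ψ⁻¹ R − z⁻¹ (R diag(v) − diag(v) R)` at every point of `U`
and in every direction `v`, then `X := R H⁻¹ diag(e^{u₁/z}, …, e^{u_N/z})` satisfies
`D_v X = (D_v Ψ) Ψ⁻¹ X + z⁻¹ diag(v) X`. -/
theorem flat_sections_deformed_connection (N : ℕ) (hN : 1 ≤ N) (z : ℂ) (hz : z ≠ 0)
    (U : Set (Fin N → ℂ)) (hU : IsOpen U)
    (Ψ R : (Fin N → ℂ) → Matrix (Fin N) (Fin N) ℂ)
    (h : (Fin N → ℂ) → Fin N → ℂ)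
    (hΨd : ∀ i j, DifferentiableOn ℂ (fun u => Ψ u i j) U)
    (hRd : ∀ i j, DifferentiableOn ℂ (fun u => R u i j) U)
    (hhd : ∀ i, DifferentiableOn ℂ (fun u => h u i) U)
    (hΨinv : ∀ u ∈ U, IsUnit (Ψ u))
    (hh : ∀ u ∈ U, ∀ i, h u i ≠ 0)
    (heq : ∀ u ∈ U, ∀ v : Fin N → ℂ,
      Dmat R u v =
        R u * Dmat (fun x => Matrix.diagonal (h x)) u v * (Matrix.diagonal (h u))⁻¹ +
          Dmat Ψ u v * (Ψ u)⁻¹ * R u -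
          z⁻¹ • (R u * Matrix.diagonal v - Matrix.diagonal v * R u)) :
    ∀ u ∈ U, ∀ v : Fin N → ℂ,
      Dmat (fun x => R x * (Matrix.diagonal (h x))⁻¹ *
          Matrix.diagonal fun i => Complex.exp (x i / z)) u v =
        Dmat Ψ u v * (Ψ u)⁻¹ *
            (R u * (Matrix.diagonal (h u))⁻¹ *
              Matrix.diagonal fun i => Complex.exp (u i / z)) +
          z⁻¹ • (Matrix.diagonal v *
            (R u * (Matrix.diagonal (h u))⁻¹ *
              Matrix.diagonal fun i => Complex.exp (u i / z))) := by
  intro u hu v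
  have hmem := hU.mem_nhds hu
  -- inverse of diagonal matrices at points of U
  have hinvdiag : ∀ x ∈ U,
      (Matrix.diagonal (h x))⁻¹ = Matrix.diagonal (fun j => (h x j)⁻¹) := by
    intro x hx
    rw [Matrix.inv_diagonal]
    have hvu : IsUnit (h x) := by
      refine IsUnit.of_mul_eq_one (fun j => (h x j)⁻¹) ?_
      funext j
      exact mul_inv_cancel₀ (hh x hx j)
    have hri : Ring.inverse (h x) = fun j => (h x j)⁻¹ := by
      funext j
      have h1 : h x j * Ring.inverse (h x) j = 1 := by
        have := congrFun (Ring.mul_inverse_cancel (h x) hvu) j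
        simpa using this
      exact (inv_eq_of_mul_eq_one_right h1).symm
    rw [hri]
  -- derivatives at u
  have hR' : ∀ i j, HasFDerivAt (fun x => R x i j)
      (fderiv ℂ (fun x => R x i j) u) u :=
    fun i j => ((hRd i j).differentiableAt hmem).hasFDerivAt
  have hh' : ∀ j, HasFDerivAt (fun x => h x j)
      (fderiv ℂ (fun x => h x j) u) u :=
    fun j => ((hhd j).differentiableAt hmem).hasFDerivAt
  -- Dmat of diagonal h is diagonal of derivatives
  have hDdiag : Dmat (fun x => Matrix.diagonal (h x)) u v =
      Matrix.diagonal (fun j => fderiv ℂ (fun x => h x j) u v) := by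
    ext k j
    simp only [Dmat, Matrix.of_apply, Matrix.diagonal_apply]
    by_cases hkj : k = j
    · subst hkj; simp
    · simp [hkj]
  ext i j
  have hjne : h u j ≠ 0 := hh u hu j
  -- the differential equation, entrywise
  have heqij : fderiv ℂ (fun x => R x i j) u v =
      R u i j * fderiv ℂ (fun x => h x j) u v * (h u j)⁻¹ +
        (Dmat Ψ u v * (Ψ u)⁻¹ * R u) i j -
        z⁻¹ * (R u i j * v j - v i * R u i j) := by
    have hm := heq u hu v
    rw [hDdiag, hinvdiag u hu] at hm
    have h2 := congrFun (congrFun hm i) j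
    simp only [Dmat, Matrix.of_apply, Matrix.mul_diagonal, Matrix.diagonal_mul,
      Matrix.sub_apply, Matrix.add_apply, Matrix.smul_apply, smul_eq_mul] at h2 ⊢
    linear_combination h2
  -- derivative of the inverse entry
  have hinv' : HasFDerivAt (fun x => (h x j)⁻¹)
      ((-((h u j) ^ 2)⁻¹) • fderiv ℂ (fun x => h x j) u) u :=
    (hasDerivAt_inv hjne).comp_hasFDerivAt u (hh' j)
  -- derivative of the exponential entry
  have hlin : HasFDerivAt (fun x : Fin N → ℂ => x j / z)
      (z⁻¹ • (ContinuousLinearMap.proj j : (Fin N → ℂ) →L[ℂ] ℂ)) u := by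
    simpa [div_eq_mul_inv, smul_smul, mul_comm] using
      ((ContinuousLinearMap.proj j : (Fin N → ℂ) →L[ℂ] ℂ).hasFDerivAt
        (x := u)).mul_const z⁻¹
  have hexp' : HasFDerivAt (fun x : Fin N → ℂ => Complex.exp (x j / z))
      (Complex.exp (u j / z) •
        (z⁻¹ • (ContinuousLinearMap.proj j : (Fin N → ℂ) →L[ℂ] ℂ))) u := by
    exact (Complex.hasDerivAt_exp (u j / z)).comp_hasFDerivAt u hlin
  -- derivative of the entry of X
  have hXentry : HasFDerivAt
      (fun x => R x i j * (h x j)⁻¹ * Complex.exp (x j / z))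
      ((R u i j * (h u j)⁻¹) • (Complex.exp (u j / z) •
          (z⁻¹ • (ContinuousLinearMap.proj j : (Fin N → ℂ) →L[ℂ] ℂ))) +
        Complex.exp (u j / z) •
          ((R u i j • ((-((h u j) ^ 2)⁻¹) • fderiv ℂ (fun x => h x j) u)) +
            (h u j)⁻¹ • fderiv ℂ (fun x => R x i j) u)) u :=
    ((hR' i j).mul hinv').mul hexp'
  -- compute LHS entry
  have hL : Dmat (fun x => R x * (Matrix.diagonal (h x))⁻¹ *
      Matrix.diagonal fun i => Complex.exp (x i / z)) u v i j =
      R u i j * (h u j)⁻¹ * (Complex.exp (u j / z) * (z⁻¹ * v j)) +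
        Complex.exp (u j / z) *
          (R u i j * (-((h u j) ^ 2)⁻¹ * fderiv ℂ (fun x => h x j) u v) +
            (h u j)⁻¹ * fderiv ℂ (fun x => R x i j) u v) := by
    have hev : (fun x => (R x * (Matrix.diagonal (h x))⁻¹ *
        Matrix.diagonal fun i => Complex.exp (x i / z)) i j) =ᶠ[nhds u]
        fun x => R x i j * (h x j)⁻¹ * Complex.exp (x j / z) := by
      filter_upwards [hmem] with x hx
      rw [hinvdiag x hx]
      simp [Matrix.mul_diagonal]
    simp only [Dmat, Matrix.of_apply]
    rw [hev.fderiv_eq, hXentry.fderiv]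
    simp only [ContinuousLinearMap.add_apply, ContinuousLinearMap.smul_apply,
      ContinuousLinearMap.proj_apply, smul_eq_mul]
  -- compute RHS entry
  have hRHS : (Dmat Ψ u v * (Ψ u)⁻¹ *
        (R u * (Matrix.diagonal (h u))⁻¹ *
          Matrix.diagonal fun i => Complex.exp (u i / z)) +
      z⁻¹ • (Matrix.diagonal v *
        (R u * (Matrix.diagonal (h u))⁻¹ *
          Matrix.diagonal fun i => Complex.exp (u i / z)))) i j =
      (Dmat Ψ u v * (Ψ u)⁻¹ * R u) i j * (h u j)⁻¹ * Complex.exp (u j / z) +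
        z⁻¹ * (v i * (R u i j * (h u j)⁻¹ * Complex.exp (u j / z))) := by
    rw [hinvdiag u hu]
    simp only [Matrix.add_apply, Matrix.smul_apply, ← mul_assoc, smul_eq_mul,
      Matrix.mul_diagonal, Matrix.diagonal_mul]
  rw [hL, hRHS, heqij, ← inv_pow]
  ring
end

section
/- Fix z ∈ ℂ with z ≠ 0 and an integer N ≥ 1. Let U ⊆ ℂ^N be open, let Ψ, R : U → Mat_N(ℂ), h : U → ℂ^N and T̂ : U → ℂ^N be holomorphic, with Ψ(u) and R(u) invertible, h_i(u) ≠ 0 and T̂_i(u) ≠ 0 for every u ∈ U and every i; set H(u) := diag(h₁(u),…,h_N(u)) and let ⊙ denote the componentwise (Hadamard) product on ℂ^N. Assume that at every point of U and for every direction v ∈ ℂ^N: (1) D_v R = R·(D_v H)·H^{-1} + (D_v Ψ)·Ψ^{-1}·R − z^{-1}·(R·diag(v) − diag(v)·R), and (2) D_v T̂ = (D_v H)·H^{-1}·T̂ − z^{-1}·T̂ ⊙ (v − T̂ ⊙ (R^{-1}·v)), where v is regarded as a column vector and R^{-1}·v is the matrix–vector product. Then Υ := R·(T̂^{⊙−1}),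 where T̂^{⊙−1} denotes the componentwise reciprocal of T̂, satisfies at every point and for every direction v: D_v Υ = (D_v Ψ)·Ψ^{-1}·Υ + z^{-1}·diag(v)·Υ − z^{-1}·v. -/
/-- The directional derivative (along `v`, at the point `u`) of a vector-valued function,
applied componentwise. -/
noncomputable def Dvec {N : ℕ} (F : (Fin N → ℂ) → Fin N → ℂ) (u v : Fin N → ℂ) :
    Fin N → ℂ :=
  fun i => fderiv ℂ (fun x => F x i) u v

/-- Fix `z ≠ 0`, `N ≥ 1`.  Let `Ψ, R : U → Mat_N(ℂ)`, `h, T̂ : U → ℂ^N` be holomorphic on an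
open `U ⊆ ℂ^N`, with `Ψ(u)`, `R(u)` invertible and `hᵢ(u) ≠ 0`, `T̂ᵢ(u) ≠ 0` everywhere;
set `H = diag(h)` and let `⊙` be the componentwise product on `ℂ^N` (the product of the
flat F-manifold in the canonical frame).  Assume the differential equations
(1) `D_v R = R (D_v H) H⁻¹ + (D_v Ψ) Ψ⁻¹ R − z⁻¹ (R diag(v) − diag(v) R)` and
(2) `D_v T̂ = (D_v H) H⁻¹ T̂ − z⁻¹ T̂ ⊙ (v − T̂ ⊙ (R⁻¹ v))`.
Then the vacuum vector `Υ := R (T̂^{⊙−1})` satisfies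
`D_v Υ = (D_v Ψ) Ψ⁻¹ Υ + z⁻¹ diag(v) Υ − z⁻¹ v`. -/
theorem vacuum_vector_equation (N : ℕ) (hN : 1 ≤ N) (z : ℂ) (hz : z ≠ 0)
    (U : Set (Fin N → ℂ)) (hU : IsOpen U)
    (Ψ R : (Fin N → ℂ) → Matrix (Fin N) (Fin N) ℂ)
    (h T : (Fin N → ℂ) → Fin N → ℂ)
    (hΨd : ∀ i j, DifferentiableOn ℂ (fun u => Ψ u i j) U)
    (hRd : ∀ i j, DifferentiableOn ℂ (fun u => R u i j) U)
    (hhd : ∀ i, DifferentiableOn ℂ (fun u => h u i) U)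
    (hTd : ∀ i, DifferentiableOn ℂ (fun u => T u i) U)
    (hΨinv : ∀ u ∈ U, IsUnit (Ψ u)) (hRinv : ∀ u ∈ U, IsUnit (R u))
    (hh : ∀ u ∈ U, ∀ i, h u i ≠ 0) (hT : ∀ u ∈ U, ∀ i, T u i ≠ 0)
    (heq1 : ∀ u ∈ U, ∀ v : Fin N → ℂ,
      Dmat R u v =
        R u * Dmat (fun x => Matrix.diagonal (h x)) u v * (Matrix.diagonal (h u))⁻¹ +
          Dmat Ψ u v * (Ψ u)⁻¹ * R u -
          z⁻¹ • (R u * Matrix.diagonal v - Matrix.diagonal v * R u))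
    (heq2 : ∀ u ∈ U, ∀ v : Fin N → ℂ,
      Dvec T u v =
        (Dmat (fun x => Matrix.diagonal (h x)) u v * (Matrix.diagonal (h u))⁻¹).mulVec
            (T u) -
          z⁻¹ • (T u * (v - T u * (R u)⁻¹.mulVec v))) :
    ∀ u ∈ U, ∀ v : Fin N → ℂ,
      Dvec (fun x => (R x).mulVec fun i => (T x i)⁻¹) u v =
        (Dmat Ψ u v * (Ψ u)⁻¹).mulVec ((R u).mulVec fun i => (T u i)⁻¹) +
          z⁻¹ • (Matrix.diagonal v).mulVec ((R u).mulVec fun i => (T u i)⁻¹) -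
          z⁻¹ • v := by
  intro u hu v
  have hmem : U ∈ nhds u := hU.mem_nhds hu
  have hRdA : ∀ i j, DifferentiableAt ℂ (fun x => R x i j) u :=
    fun i j => (hRd i j u hu).differentiableAt hmem
  have hTdA : ∀ j, DifferentiableAt ℂ (fun x => T x j) u :=
    fun j => (hTd j u hu).differentiableAt hmem
  have hTne : ∀ j, T u j ≠ 0 := hT u hu
  -- the diagonal matrix `a = (D_v H) H⁻¹`
  have hDdiag : Dmat (fun x => Matrix.diagonal (h x)) u v = Matrix.diagonal (Dvec h u v) := by
    ext i j
    simp only [Dmat, Matrix.of_apply, Matrix.diagonal_apply]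
    by_cases hij : i = j
    · subst hij; simp [Dvec]
    · simp [hij]
  have hdinv : (Matrix.diagonal (h u))⁻¹ = Matrix.diagonal (fun j => (h u j)⁻¹) := by
    apply Matrix.inv_eq_right_inv
    rw [Matrix.diagonal_mul_diagonal,
      show (fun i => h u i * (h u i)⁻¹) = fun _ => (1 : ℂ) from
        funext fun j => mul_inv_cancel₀ (hh u hu j)]
    exact Matrix.diagonal_one
  set a : Fin N → ℂ := fun j => Dvec h u v j * (h u j)⁻¹ with ha
  have hA : Dmat (fun x => Matrix.diagonal (h x)) u v * (Matrix.diagonal (h u))⁻¹ =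
      Matrix.diagonal a := by
    rw [hDdiag, hdinv, Matrix.diagonal_mul_diagonal]
  set w : Fin N → ℂ := (R u)⁻¹.mulVec v with hwdef
  -- component form of heq2
  have heq2' : ∀ j, Dvec T u v j =
      a j * T u j - z⁻¹ * (T u j * (v j - T u j * w j)) := by
    intro j
    rw [heq2 u hu v]
    simp [hA, Matrix.mulVec_diagonal, hwdef]
  -- derivative of the componentwise inverse of T
  have hDS : ∀ j, fderiv ℂ (fun x => (T x j)⁻¹) u v =
      -(a j * (T u j)⁻¹) + z⁻¹ * (v j * (T u j)⁻¹) - z⁻¹ * w j := by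
    intro j
    have h1 : HasFDerivAt (fun x => (T x j)⁻¹)
        ((-(ContinuousLinearMap.mulLeftRight ℂ ℂ (T u j)⁻¹ (T u j)⁻¹)).comp
          (fderiv ℂ (fun x => T x j) u)) u :=
      (hasFDerivAt_inv' (hTne j)).comp u (hTdA j).hasFDerivAt
    rw [h1.fderiv]
    simp only [ContinuousLinearMap.comp_apply, ContinuousLinearMap.neg_apply,
      ContinuousLinearMap.mulLeftRight_apply]
    have : fderiv ℂ (fun x => T x j) u v = Dvec T u v j := rfl
    rw [this, heq2' j]
    have ht : T u j * (T u j)⁻¹ = 1 := mul_inv_cancel₀ (hTne j)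
    calc -((T u j)⁻¹ * (a j * T u j - z⁻¹ * (T u j * (v j - T u j * w j))) * (T u j)⁻¹)
        = -(a j * ((T u j) * (T u j)⁻¹) * (T u j)⁻¹)
            + z⁻¹ * (((T u j) * (T u j)⁻¹) * (v j * (T u j)⁻¹))
            - z⁻¹ * (((T u j) * (T u j)⁻¹) * (((T u j) * (T u j)⁻¹) * w j)) := by ring
      _ = -(a j * (T u j)⁻¹) + z⁻¹ * (v j * (T u j)⁻¹) - z⁻¹ * w j := by rw [ht]; ring
  -- component form of heq1
  have heq1' : ∀ i j, Dmat R u v i j =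
      R u i j * a j + (Dmat Ψ u v * (Ψ u)⁻¹ * R u) i j -
        z⁻¹ * (R u i j * v j - v i * R u i j) := by
    intro i j
    rw [heq1 u hu v]
    simp only [Matrix.sub_apply, Matrix.add_apply, Matrix.smul_apply, smul_eq_mul,
      mul_assoc, hA]
    rw [← mul_assoc]
    simp [Matrix.mul_diagonal, Matrix.diagonal_mul]
  -- the derivative of Υ = R (T^{⊙-1})
  have hDL : ∀ i, Dvec (fun x => (R x).mulVec fun k => (T x k)⁻¹) u v i
      = ∑ j, (R u i j * fderiv ℂ (fun x => (T x j)⁻¹) u v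
          + (T u j)⁻¹ * Dmat R u v i j) := by
    intro i
    have hfd : ∀ j : Fin N, HasFDerivAt (fun x => R x i j * (T x j)⁻¹)
        (R u i j • fderiv ℂ (fun x => (T x j)⁻¹) u
          + (T u j)⁻¹ • fderiv ℂ (fun x => R x i j) u) u := by
      intro j
      have h2 : DifferentiableAt ℂ (fun x => (T x j)⁻¹) u := (hTdA j).inv (hTne j)
      exact (hRdA i j).hasFDerivAt.mul h2.hasFDerivAt
    have hsum : HasFDerivAt (fun x => ∑ j, R x i j * (T x j)⁻¹)
        (∑ j : Fin N, (R u i j • fderiv ℂ (fun x => (T x j)⁻¹) u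
          + (T u j)⁻¹ • fderiv ℂ (fun x => R x i j) u)) u :=
      HasFDerivAt.fun_sum fun j _ => hfd j
    have hfun : (fun x => (R x).mulVec (fun k => (T x k)⁻¹) i)
        = fun x => ∑ j, R x i j * (T x j)⁻¹ := rfl
    simp only [Dvec, hfun, hsum.fderiv]
    simp [ContinuousLinearMap.sum_apply, Dmat]
  -- R (R⁻¹ v) = v
  have hRw : (R u).mulVec w = v := by
    rw [hwdef, Matrix.mulVec_mulVec,
      Matrix.mul_nonsing_inv _ ((Matrix.isUnit_iff_isUnit_det _).mp (hRinv u hu)),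
      Matrix.one_mulVec]
  funext i
  rw [hDL i]
  -- rewrite RHS as a single sum
  have hRHS : ((Dmat Ψ u v * (Ψ u)⁻¹).mulVec ((R u).mulVec fun k => (T u k)⁻¹) +
        z⁻¹ • (Matrix.diagonal v).mulVec ((R u).mulVec fun k => (T u k)⁻¹) -
        z⁻¹ • v) i
      = ∑ j, ((Dmat Ψ u v * (Ψ u)⁻¹ * R u) i j * (T u j)⁻¹
          + z⁻¹ * (v i * (R u i j * (T u j)⁻¹)) - z⁻¹ * (R u i j * w j)) := by
    rw [Finset.sum_sub_distrib, Finset.sum_add_distrib]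
    simp only [Pi.add_apply, Pi.sub_apply, Pi.smul_apply, smul_eq_mul]
    congr 1
    · congr 1
      · rw [Matrix.mulVec_mulVec]
        simp [Matrix.mulVec, dotProduct]
      · rw [Matrix.mulVec_diagonal]
        simp [Matrix.mulVec, dotProduct, Finset.mul_sum]
    · rw [← Finset.mul_sum]
      congr 1
      conv_lhs => rw [← hRw]
      simp [Matrix.mulVec, dotProduct]
  rw [hRHS]
  apply Finset.sum_congr rfl
  intro j _
  rw [hDS j, heq1' i j]
  ring
end

section
/- Let N ≥ 1, let U ⊆ ℂ^N be open, and let Ψ : U → Mat_N(ℂ) be differentiable (holomorphic) with Ψ(u) invertible for all u ∈ U; write Q := Ψ^{-1} for the pointwise matrix inverse and ∂_i for the partial derivative in the i-th coordinate. Then for all indices i, b, c, ε ∈ {1,…,N} and at every point of U: ∑_{β,γ,j=1}^N Q^β_b · Q^γ_c · ∂_i(Ψ^j_β · Ψ^j_γ · Q^ε_j) = (∂_iΨ·Q)^c_b · Q^ε_c + (∂_iΨ·Q)^b_c · Q^ε_b − δ_{b,c} · ∑_{j=1}^N (∂_iΨ·Q)^j_b · Q^ε_j, where M^x_y denotes the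 entry of the matrix M in row x and column y and δ_{b,c} is the Kronecker delta. -/
open Finset in
lemma key_alg {N : ℕ} (A Q D : Matrix (Fin N) (Fin N) ℂ) (hAQ : A * Q = 1) (b c ε : Fin N) :
    (∑ β, ∑ γ, ∑ j, Q β b * Q γ c *
      (A j β * A j γ * (-((Q * D * Q) ε j)) + Q ε j * (A j β * D j γ + A j γ * D j β)))
    = (D * Q) c b * Q ε c + (D * Q) b c * Q ε b -
        (if b = c then (1:ℂ) else 0) * ∑ j, (D * Q) j b * Q ε j := by
  classical
  have fact : ∀ (x y : Fin N → ℂ) (k : ℂ),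
      (∑ β, ∑ γ, x β * y γ * k) = (∑ β, x β) * (∑ γ, y γ) * k := by
    intro x y k
    rw [Finset.sum_mul_sum, Finset.sum_mul]
    exact Finset.sum_congr rfl fun β _ => by rw [Finset.sum_mul]
  have hA : ∀ (d : Fin N) (j : Fin N), (∑ β, Q β d * A j β) = if j = d then (1:ℂ) else 0 := by
    intro d j
    have : (∑ β, Q β d * A j β) = (A * Q) j d := by
      rw [Matrix.mul_apply]; exact Finset.sum_congr rfl fun β _ => mul_comm _ _
    rw [this, hAQ, Matrix.one_apply]
  have hD : ∀ (d : Fin N) (j : Fin N), (∑ β, Q β d * D j β) = (D * Q) j d := by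
    intro d j
    rw [Matrix.mul_apply]; exact Finset.sum_congr rfl fun β _ => mul_comm _ _
  calc (∑ β, ∑ γ, ∑ j, Q β b * Q γ c *
      (A j β * A j γ * (-((Q * D * Q) ε j)) + Q ε j * (A j β * D j γ + A j γ * D j β)))
      = ∑ j, ∑ β, ∑ γ, ((Q β b * A j β) * (Q γ c * A j γ) * (-((Q * D * Q) ε j))
          + ((Q β b * A j β) * (Q γ c * D j γ) * Q ε j
          + (Q β b * D j β) * (Q γ c * A j γ) * Q ε j)) := by
        rw [show (∑ β, ∑ γ, ∑ j, Q β b * Q γ c *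
          (A j β * A j γ * (-((Q * D * Q) ε j)) + Q ε j * (A j β * D j γ + A j γ * D j β)))
          = ∑ β, ∑ j, ∑ γ, Q β b * Q γ c *
          (A j β * A j γ * (-((Q * D * Q) ε j)) + Q ε j * (A j β * D j γ + A j γ * D j β))
          from Finset.sum_congr rfl fun β _ => Finset.sum_comm, Finset.sum_comm]
        refine Finset.sum_congr rfl fun j _ => Finset.sum_congr rfl fun β _ =>
          Finset.sum_congr rfl fun γ _ => by ring
    _ = ∑ j, ((if j = b then (1:ℂ) else 0) * (if j = c then (1:ℂ) else 0) * (-((Q * D * Q) ε j))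
          + ((if j = b then (1:ℂ) else 0) * (D * Q) j c * Q ε j
          + (D * Q) j b * (if j = c then (1:ℂ) else 0) * Q ε j)) := by
        refine Finset.sum_congr rfl fun j _ => ?_
        simp only [Finset.sum_add_distrib]
        rw [fact, fact, fact, hA, hA, hD, hD]
    _ = (D * Q) c b * Q ε c + (D * Q) b c * Q ε b -
        (if b = c then (1:ℂ) else 0) * ∑ j, (D * Q) j b * Q ε j := by
        rw [Finset.sum_add_distrib, Finset.sum_add_distrib]
        have h1 : (∑ j, (if j = b then (1:ℂ) else 0) * (if j = c then (1:ℂ) else 0)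
            * (-((Q * D * Q) ε j)))
            = (if b = c then (1:ℂ) else 0) * (-((Q * D * Q) ε b)) := by
          rw [Finset.sum_eq_single b]
          · simp
          · intro j _ hj; simp [hj]
          · simp
        have h2 : (∑ j, (if j = b then (1:ℂ) else 0) * (D * Q) j c * Q ε j)
            = (D * Q) b c * Q ε b := by
          rw [Finset.sum_eq_single b] <;> simp +contextual
        have h3 : (∑ j, (D * Q) j b * (if j = c then (1:ℂ) else 0) * Q ε j)
            = (D * Q) c b * Q ε c := by
          rw [Finset.sum_eq_single c] <;> simp +contextual
        have h4 : (∑ j, (D * Q) j b * Q ε j) = (Q * D * Q) ε b := by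
          rw [mul_assoc, Matrix.mul_apply]
          exact Finset.sum_congr rfl fun j _ => mul_comm _ _
        rw [h1, h2, h3, h4]
        ring



/-- Let `Ψ : U → Mat_N(ℂ)` be holomorphic with invertible values on an open `U ⊆ ℂ^N`, and
write `Q := Ψ⁻¹` (pointwise inverse) and `∂_i` for the `i`-th partial derivative.  Then, at
every point of `U` and for all indices `i, b, c, ε`:
`∑_{β,γ,j} Q^β_b Q^γ_c ∂_i(Ψ^j_β Ψ^j_γ Q^ε_j)
  = (∂_iΨ·Q)^c_b Q^ε_c + (∂_iΨ·Q)^b_c Q^ε_b − δ_{b,c} ∑_j (∂_iΨ·Q)^j_b Q^ε_j`,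
where `M^x_y` is the entry of `M` in row `x` and column `y`. -/
theorem structure_constants_derivative_identity (N : ℕ) (hN : 1 ≤ N)
    (U : Set (Fin N → ℂ)) (hU : IsOpen U)
    (Ψ : (Fin N → ℂ) → Matrix (Fin N) (Fin N) ℂ)
    (hΨd : ∀ a b, DifferentiableOn ℂ (fun x => Ψ x a b) U)
    (hΨinv : ∀ u ∈ U, IsUnit (Ψ u)) :
    ∀ u ∈ U, ∀ i b c ε : Fin N,
      (∑ β, ∑ γ, ∑ j,
        (Ψ u)⁻¹ β b * (Ψ u)⁻¹ γ c *
          fderiv ℂ (fun x => Ψ x j β * Ψ x j γ * (Ψ x)⁻¹ ε j) u (Pi.single i 1)) =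
        (Matrix.of (fun a b' => fderiv ℂ (fun x => Ψ x a b') u (Pi.single i 1)) *
              (Ψ u)⁻¹) c b * (Ψ u)⁻¹ ε c +
          (Matrix.of (fun a b' => fderiv ℂ (fun x => Ψ x a b') u (Pi.single i 1)) *
              (Ψ u)⁻¹) b c * (Ψ u)⁻¹ ε b -
          (if b = c then (1 : ℂ) else 0) *
            ∑ j,
              (Matrix.of (fun a b' => fderiv ℂ (fun x => Ψ x a b') u (Pi.single i 1)) *
                  (Ψ u)⁻¹) j b * (Ψ u)⁻¹ ε j := by
  intro u hu i b c ε
  classical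
  letI : NormedRing (Matrix (Fin N) (Fin N) ℂ) := Matrix.linftyOpNormedRing
  letI : NormedAlgebra ℂ (Matrix (Fin N) (Fin N) ℂ) := Matrix.linftyOpNormedAlgebra
  letI : CompleteSpace (Matrix (Fin N) (Fin N) ℂ) := FiniteDimensional.complete ℂ _
  set v : Fin N → ℂ := Pi.single i 1 with hv
  have hab : ∀ a b', HasFDerivAt (fun x => Ψ x a b') (fderiv ℂ (fun x => Ψ x a b') u) u :=
    fun a b' => ((hΨd a b').differentiableAt (hU.mem_nhds hu)).hasFDerivAt
  set e : (Fin N → Fin N → ℂ) ≃L[ℂ] Matrix (Fin N) (Fin N) ℂ :=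
    (Matrix.ofLinearEquiv ℂ).toContinuousLinearEquiv with he
  set Lpi : (Fin N → ℂ) →L[ℂ] (Fin N → Fin N → ℂ) :=
    ContinuousLinearMap.pi fun a => ContinuousLinearMap.pi fun b' =>
      fderiv ℂ (fun x => Ψ x a b') u with hLpi
  have hpi : HasFDerivAt (fun x a b' => Ψ x a b') Lpi u :=
    hasFDerivAt_pi.2 fun a => hasFDerivAt_pi.2 fun b' => hab a b'
  have hmat : HasFDerivAt Ψ (e.toContinuousLinearMap.comp Lpi) u := by
    exact (e.toContinuousLinearMap.hasFDerivAt).comp u hpi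
  obtain ⟨w, hw⟩ := hΨinv u hu
  have hw' : (↑w⁻¹ : Matrix (Fin N) (Fin N) ℂ) = (Ψ u)⁻¹ := by
    rw [Matrix.coe_units_inv, hw]
  set L2 : (Fin N → ℂ) →L[ℂ] Matrix (Fin N) (Fin N) ℂ :=
    (-(ContinuousLinearMap.mulLeftRight ℂ _ (↑w⁻¹) (↑w⁻¹))).comp
      (e.toContinuousLinearMap.comp Lpi) with hL2
  have hinv : HasFDerivAt (fun x => (Ψ x)⁻¹) L2 u := by
    simp only [Matrix.nonsing_inv_eq_ringInverse]
    have h0 := hasFDerivAt_ringInverse (𝕜 := ℂ) w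
    rw [hw] at h0
    exact h0.comp u hmat
  set D : Matrix (Fin N) (Fin N) ℂ :=
    Matrix.of (fun a b' => fderiv ℂ (fun x => Ψ x a b') u v) with hD
  have hL2v : L2 v = -((Ψ u)⁻¹ * D * (Ψ u)⁻¹) := by
    simp only [hL2, ContinuousLinearMap.comp_apply, ContinuousLinearMap.neg_apply,
      ContinuousLinearMap.mulLeftRight_apply, hw']
    rfl
  have hQj : ∀ j : Fin N, HasFDerivAt (fun x => (Ψ x)⁻¹ ε j)
      ((LinearMap.toContinuousLinearMap (Matrix.entryLinearMap ℂ ℂ ε j)).comp L2) u :=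
    fun j => ((LinearMap.toContinuousLinearMap
      (Matrix.entryLinearMap ℂ ℂ ε j)).hasFDerivAt).comp u hinv
  have hQval : ∀ j : Fin N, fderiv ℂ (fun x => (Ψ x)⁻¹ ε j) u v
      = -(((Ψ u)⁻¹ * D * (Ψ u)⁻¹) ε j) := by
    intro j
    rw [(hQj j).fderiv, ContinuousLinearMap.comp_apply, hL2v]
    simp [Matrix.entryLinearMap, LinearMap.coe_mk, AddHom.coe_mk]
    rfl
  have hprod : ∀ β γ j : Fin N,
      fderiv ℂ (fun x => Ψ x j β * Ψ x j γ * (Ψ x)⁻¹ ε j) u v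
      = Ψ u j β * Ψ u j γ * (-(((Ψ u)⁻¹ * D * (Ψ u)⁻¹) ε j))
        + (Ψ u)⁻¹ ε j * (Ψ u j β * D j γ + Ψ u j γ * D j β) := by
    intro β γ j
    have h := (((hab j β).mul (hab j γ)).mul (hQj j)).fderiv
    rw [show (fun x => Ψ x j β * Ψ x j γ * (Ψ x)⁻¹ ε j) = ((fun x => Ψ x j β) * fun x => Ψ x j γ) * fun x => (Ψ x)⁻¹ ε j from rfl, h]
    simp only [ContinuousLinearMap.add_apply, ContinuousLinearMap.smul_apply,
      ContinuousLinearMap.comp_apply, smul_eq_mul, hL2v, Pi.mul_apply]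
    have hDv : ∀ a b', fderiv ℂ (fun x => Ψ x a b') u v = D a b' := fun _ _ => rfl
    rw [hDv, hDv,
      show ∀ M : Matrix (Fin N) (Fin N) ℂ,
        (LinearMap.toContinuousLinearMap (Matrix.entryLinearMap ℂ ℂ ε j)) M = M ε j
        from fun _ => rfl]
    simp only [Matrix.neg_apply, mul_neg]
    try ring
  have hAQ : Ψ u * (Ψ u)⁻¹ = 1 :=
    Matrix.mul_nonsing_inv _ ((Matrix.isUnit_iff_isUnit_det _).1 ⟨w, hw⟩)
  calc (∑ β, ∑ γ, ∑ j,
        (Ψ u)⁻¹ β b * (Ψ u)⁻¹ γ c *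
          fderiv ℂ (fun x => Ψ x j β * Ψ x j γ * (Ψ x)⁻¹ ε j) u v)
      = ∑ β, ∑ γ, ∑ j, (Ψ u)⁻¹ β b * (Ψ u)⁻¹ γ c *
          (Ψ u j β * Ψ u j γ * (-(((Ψ u)⁻¹ * D * (Ψ u)⁻¹) ε j))
            + (Ψ u)⁻¹ ε j * (Ψ u j β * D j γ + Ψ u j γ * D j β)) :=
        Finset.sum_congr rfl fun β _ => Finset.sum_congr rfl fun γ _ =>
          Finset.sum_congr rfl fun j _ => by rw [hprod]
    _ = _ := key_alg (Ψ u) ((Ψ u)⁻¹) D hAQ b c ε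
end
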